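/- (Bell's theorem) There is no probability space (Λ, μ) together with functions A : S² × Λ → {-1, 1} and B : S² × Λ → {-1, 1} (with A(a,·), B(b,·) measurable for all a, b) such that ∫_Λ A(a, λ) B(b, λ) dμ(λ) = -a·b for all unit vectors a, b ∈ S². -/

import Mathlib

/-!
For values in `[-1, 1]`, `x₁ (y₁ + y₂) + x₂ (y₁ - y₂) ≤ |y₁ + y₂| + |y₁ - y₂| ≤ 2`. Integrating
this pointwise bound, the correlations of any local hidden variable model satisfy the CHSH
inequality `E(a₁,b₁) + E(a₁,b₂) + E(a₂,b₁) - E(a₂,b₂) ≤ 2`. The singlet correlation `-a·b`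
violates it: for coplanar directions with `a₁ ⟂ a₂` and `b₁, b₂` at `±45°` from `-a₁`, the
CHSH sum is `2√2`.
-/

open MeasureTheory Metric
open scoped RealInnerProductSpace

/-- The unit sphere in ℝ³. -/
noncomputable abbrev Sphere2 := Metric.sphere (0 : EuclideanSpace ℝ (Fin 3)) 1

lemma mul_le_abs_of_abs_le_one {x s : ℝ} (hx : |x| ≤ 1) : x * s ≤ |s| :=
  calc x * s ≤ |x * s| := le_abs_self _
    _ = |x| * |s| := abs_mul x s
    _ ≤ |s| := mul_le_of_le_one_left (abs_nonneg s) hx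

lemma abs_add_add_abs_sub_le_two {y₁ y₂ : ℝ} (hy₁ : |y₁| ≤ 1) (hy₂ : |y₂| ≤ 1) :
    |y₁ + y₂| + |y₁ - y₂| ≤ 2 := by
  rw [abs_le] at hy₁ hy₂
  rcases abs_cases (y₁ + y₂) with ⟨h, _⟩ | ⟨h, _⟩ <;>
    rcases abs_cases (y₁ - y₂) with ⟨h', _⟩ | ⟨h', _⟩ <;> rw [h, h'] <;> linarith

lemma chsh_le_two {x₁ x₂ y₁ y₂ : ℝ} (hx₁ : |x₁| ≤ 1) (hx₂ : |x₂| ≤ 1) (hy₁ : |y₁| ≤ 1)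
    (hy₂ : |y₂| ≤ 1) : x₁ * y₁ + x₁ * y₂ + x₂ * y₁ - x₂ * y₂ ≤ 2 :=
  calc x₁ * y₁ + x₁ * y₂ + x₂ * y₁ - x₂ * y₂ = x₁ * (y₁ + y₂) + x₂ * (y₁ - y₂) := by ring
    _ ≤ |y₁ + y₂| + |y₁ - y₂| :=
      add_le_add (mul_le_abs_of_abs_le_one hx₁) (mul_le_abs_of_abs_le_one hx₂)
    _ ≤ 2 := abs_add_add_abs_sub_le_two hy₁ hy₂

section CHSH

variable {ι Λ : Type*} [MeasurableSpace Λ] {μ : Measure Λ} {A B : ι → Λ → ℝ}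

lemma integrable_mul_of_abs_le_one [IsFiniteMeasure μ] (hAm : ∀ a, AEStronglyMeasurable (A a) μ)
    (hBm : ∀ b, AEStronglyMeasurable (B b) μ) (hA : ∀ a l, |A a l| ≤ 1) (hB : ∀ b l, |B b l| ≤ 1)
    (a b : ι) : Integrable (fun l => A a l * B b l) μ :=
  .of_bound ((hAm a).mul (hBm b)) 1 <| ae_of_all _ fun l => by
    rw [Real.norm_eq_abs, abs_mul]
    exact mul_le_one₀ (hA a l) (abs_nonneg _) (hB b l)

theorem chsh_inequality [IsProbabilityMeasure μ] (hAm : ∀ a, AEStronglyMeasurable (A a) μ)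
    (hBm : ∀ b, AEStronglyMeasurable (B b) μ) (hA : ∀ a l, |A a l| ≤ 1) (hB : ∀ b l, |B b l| ≤ 1)
    (a₁ a₂ b₁ b₂ : ι) :
    ∫ l, A a₁ l * B b₁ l ∂μ + ∫ l, A a₁ l * B b₂ l ∂μ + ∫ l, A a₂ l * B b₁ l ∂μ
      - ∫ l, A a₂ l * B b₂ l ∂μ ≤ 2 := by
  have hint := integrable_mul_of_abs_le_one hAm hBm hA hB
  have h₁₂ : Integrable (fun l => A a₁ l * B b₁ l + A a₁ l * B b₂ l) μ :=
    (hint a₁ b₁).add (hint a₁ b₂)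
  have h₁₂₃ : Integrable (fun l => A a₁ l * B b₁ l + A a₁ l * B b₂ l + A a₂ l * B b₁ l) μ :=
    h₁₂.add (hint a₂ b₁)
  calc _ = ∫ l, (A a₁ l * B b₁ l + A a₁ l * B b₂ l + A a₂ l * B b₁ l - A a₂ l * B b₂ l) ∂μ := by
        rw [integral_sub h₁₂₃ (hint a₂ b₂), integral_add h₁₂ (hint a₂ b₁),
          integral_add (hint a₁ b₁) (hint a₁ b₂)]
    _ ≤ ∫ _, (2 : ℝ) ∂μ := integral_mono (h₁₂₃.sub (hint a₂ b₂)) (integrable_const 2)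
        fun l => chsh_le_two (hA a₁ l) (hA a₂ l) (hB b₁ l) (hB b₂ l)
    _ = 2 := by simp

end CHSH

noncomputable def Sphere2.ofPlanar (x y : ℝ) (h : x ^ 2 + y ^ 2 = 1) : Sphere2 :=
  ⟨!₂[x, y, 0], by simp [EuclideanSpace.norm_eq, Fin.sum_univ_three, h]⟩

lemma Sphere2.inner_ofPlanar {x y x' y' : ℝ} (h : x ^ 2 + y ^ 2 = 1)
    (h' : x' ^ 2 + y' ^ 2 = 1) :
    ⟪(ofPlanar x y h : EuclideanSpace ℝ (Fin 3)), ofPlanar x' y' h'⟫ = x * x' + y * y' := by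
  simp only [ofPlanar, PiLp.inner_apply, RCLike.inner_apply, Real.ringHom_apply,
    Fin.sum_univ_three, Matrix.cons_val_zero, Matrix.cons_val_one, Matrix.cons_val]
  ring

theorem exists_singlet_chsh_violation : ∃ a₁ a₂ b₁ b₂ : Sphere2,
    2 < -⟪(a₁ : EuclideanSpace ℝ (Fin 3)), b₁⟫ - ⟪(a₁ : EuclideanSpace ℝ (Fin 3)), b₂⟫
      - ⟪(a₂ : EuclideanSpace ℝ (Fin 3)), b₁⟫ + ⟪(a₂ : EuclideanSpace ℝ (Fin 3)), b₂⟫ := by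
  set c : ℝ := √2 / 2 with hc_def
  have hc : c ^ 2 + c ^ 2 = 1 := by
    rw [hc_def, div_pow, Real.sq_sqrt zero_le_two]
    norm_num
  refine ⟨Sphere2.ofPlanar 1 0 (by norm_num), Sphere2.ofPlanar 0 1 (by norm_num),
    Sphere2.ofPlanar (-c) (-c) (by simpa only [neg_sq] using hc),
    Sphere2.ofPlanar (-c) c (by simpa only [neg_sq] using hc), ?_⟩
  simp only [Sphere2.inner_ofPlanar]
  linarith [Real.one_lt_sqrt_two]

theorem bell_theorem :
    ¬ ∃ (Λ : Type) (_ : MeasurableSpace Λ) (μ : Measure Λ) (_ : IsProbabilityMeasure μ)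
        (A B : Sphere2 → Λ → ℝ),
      (∀ a l, A a l = 1 ∨ A a l = -1) ∧
      (∀ b l, B b l = 1 ∨ B b l = -1) ∧
      (∀ a, Measurable (A a)) ∧
      (∀ b, Measurable (B b)) ∧
      (∀ a b : Sphere2,
        ∫ l, A a l * B b l ∂μ =
          -⟪(a : EuclideanSpace ℝ (Fin 3)), (b : EuclideanSpace ℝ (Fin 3))⟫) := by
  rintro ⟨Λ, _, μ, _, A, B, hA, hB, hAm, hBm, hE⟩
  obtain ⟨a₁, a₂, b₁, b₂, hviolation⟩ := exists_singlet_chsh_violation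
  have abs_le_one_of_sign {x : ℝ} (hx : x = 1 ∨ x = -1) : |x| ≤ 1 := by
    rcases hx with rfl | rfl <;> simp
  have hchsh := chsh_inequality (μ := μ) (fun a => (hAm a).aestronglyMeasurable)
    (fun b => (hBm b).aestronglyMeasurable) (fun a l => abs_le_one_of_sign (hA a l))
    (fun b l => abs_le_one_of_sign (hB b l)) a₁ a₂ b₁ b₂
  rw [hE, hE, hE, hE] at hchsh
  linarith
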